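/- If a finite connected graph G contains an induced subgraph isomorphic to the 4-cycle C_4, then QEC(G) ≥ 0. -/
import Mathlib


/-- The quadratic embedding constant of a finite graph. -/
noncomputable def QEC {V : Type*} [Fintype V] (G : SimpleGraph V) : ℝ :=
  sSup {x : ℝ | ∃ f : V → ℝ,
    (∑ i, f i ^ 2) = 1 ∧ (∑ i, f i) = 0 ∧
    x = ∑ i, ∑ j, (G.dist i j : ℝ) * f i * f j}

/-- The 4-cycle C_4 on Fin 4. -/
def cycleFour : SimpleGraph (Fin 4) := SimpleGraph.fromRel (fun i j => j = i + 1)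

lemma cycleFour_adj (i j : Fin 4) : cycleFour.Adj i j ↔ i ≠ j ∧ (j = i + 1 ∨ i = j + 1) := by
  simp [cycleFour, SimpleGraph.fromRel_adj]

/-- if a finite connected graph contains an induced 4-cycle,
then QEC(G) ≥ 0. -/
theorem qec_nonneg_of_induced_C4 {V : Type*} [Fintype V]
    (G : SimpleGraph V) (hG : G.Connected)
    (h : ∃ φ : Fin 4 ↪ V, ∀ i j, G.Adj (φ i) (φ j) ↔ cycleFour.Adj i j) :
    0 ≤ QEC G := by
  classical
  obtain ⟨φ, hφ⟩ := h
  have hne : ∀ i j : Fin 4, i ≠ j → φ i ≠ φ j := fun i j hij => φ.injective.ne hij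
  -- adjacency facts
  have a01 : G.Adj (φ 0) (φ 1) := (hφ 0 1).mpr ((cycleFour_adj 0 1).mpr (by decide))
  have a12 : G.Adj (φ 1) (φ 2) := (hφ 1 2).mpr ((cycleFour_adj 1 2).mpr (by decide))
  have a23 : G.Adj (φ 2) (φ 3) := (hφ 2 3).mpr ((cycleFour_adj 2 3).mpr (by decide))
  have a03 : G.Adj (φ 0) (φ 3) := (hφ 0 3).mpr ((cycleFour_adj 0 3).mpr (by decide))
  have na02 : ¬ G.Adj (φ 0) (φ 2) := fun hA => by
    have := (cycleFour_adj 0 2).mp ((hφ 0 2).mp hA); revert this; decide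
  have na13 : ¬ G.Adj (φ 1) (φ 3) := fun hA => by
    have := (cycleFour_adj 1 3).mp ((hφ 1 3).mp hA); revert this; decide
  -- distance facts
  have d01 : G.dist (φ 0) (φ 1) = 1 := SimpleGraph.dist_eq_one_iff_adj.mpr a01
  have d12 : G.dist (φ 1) (φ 2) = 1 := SimpleGraph.dist_eq_one_iff_adj.mpr a12
  have d23 : G.dist (φ 2) (φ 3) = 1 := SimpleGraph.dist_eq_one_iff_adj.mpr a23
  have d03 : G.dist (φ 0) (φ 3) = 1 := SimpleGraph.dist_eq_one_iff_adj.mpr a03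
  have d02 : G.dist (φ 0) (φ 2) = 2 := by
    have hle : G.dist (φ 0) (φ 2) ≤ 2 := by
      have := hG.dist_triangle (u := φ 0) (v := φ 1) (w := φ 2)
      omega
    have hpos : 0 < G.dist (φ 0) (φ 2) := hG.pos_dist_of_ne (hne 0 2 (by decide))
    have hne1 : G.dist (φ 0) (φ 2) ≠ 1 := fun h1 =>
      na02 (SimpleGraph.dist_eq_one_iff_adj.mp h1)
    omega
  have d13 : G.dist (φ 1) (φ 3) = 2 := by
    have hle : G.dist (φ 1) (φ 3) ≤ 2 := by
      have := hG.dist_triangle (u := φ 1) (v := φ 2) (w := φ 3)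
      omega
    have hpos : 0 < G.dist (φ 1) (φ 3) := hG.pos_dist_of_ne (hne 1 3 (by decide))
    have hne1 : G.dist (φ 1) (φ 3) ≠ 1 := fun h1 =>
      na13 (SimpleGraph.dist_eq_one_iff_adj.mp h1)
    omega
  -- the test function
  set f : V → ℝ := fun v =>
    if v = φ 0 then 1/2 else if v = φ 1 then -(1/2) else
    if v = φ 2 then 1/2 else if v = φ 3 then -(1/2) else 0 with hf
  have f0 : f (φ 0) = 1/2 := by simp [hf]
  have f1 : f (φ 1) = -(1/2) := by simp [hf, hne 1 0 (by decide)]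
  have f2 : f (φ 2) = 1/2 := by simp [hf, hne 2 0 (by decide), hne 2 1 (by decide)]
  have f3 : f (φ 3) = -(1/2) := by
    simp [hf, hne 3 0 (by decide), hne 3 1 (by decide), hne 3 2 (by decide)]
  have fzero : ∀ v : V, v ∉ ({φ 0, φ 1, φ 2, φ 3} : Finset V) → f v = 0 := by
    intro v hv
    simp only [Finset.mem_insert, Finset.mem_singleton, not_or] at hv
    simp [hf, hv.1, hv.2.1, hv.2.2.1, hv.2.2.2]
  have key : ∀ g : V → ℝ, (∀ v, v ∉ ({φ 0, φ 1, φ 2, φ 3} : Finset V) → g v = 0) →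
      ∑ v, g v = g (φ 0) + g (φ 1) + g (φ 2) + g (φ 3) := by
    intro g hg
    rw [← Finset.sum_subset (Finset.subset_univ ({φ 0, φ 1, φ 2, φ 3} : Finset V))
        (fun x _ hx => hg x hx)]
    rw [show ({φ 0, φ 1, φ 2, φ 3} : Finset V)
        = insert (φ 0) (insert (φ 1) (insert (φ 2) {φ 3})) from rfl]
    rw [Finset.sum_insert (by
          simp [hne 0 1 (by decide), hne 0 2 (by decide), hne 0 3 (by decide)]),
        Finset.sum_insert (by simp [hne 1 2 (by decide), hne 1 3 (by decide)]),
        Finset.sum_insert (by simp [hne 2 3 (by decide)]),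
        Finset.sum_singleton]
    ring
  have hsq : (∑ i, f i ^ 2) = 1 := by
    rw [key (fun v => f v ^ 2) (fun v hv => by simp [fzero v hv])]
    rw [f0, f1, f2, f3]; norm_num
  have hlin : (∑ i, f i) = 0 := by
    rw [key f fzero, f0, f1, f2, f3]; ring
  have hx : (∑ i, ∑ j, (G.dist i j : ℝ) * f i * f j) = 0 := by
    rw [key (fun i => ∑ j, (G.dist i j : ℝ) * f i * f j)
        (fun v hv => by simp [fzero v hv])]
    have inner : ∀ i : V, (∑ j, (G.dist i j : ℝ) * f i * f j)
        = (G.dist i (φ 0) : ℝ) * f i * f (φ 0) + (G.dist i (φ 1) : ℝ) * f i * f (φ 1)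
          + (G.dist i (φ 2) : ℝ) * f i * f (φ 2) + (G.dist i (φ 3) : ℝ) * f i * f (φ 3) := by
      intro i
      exact key (fun j => (G.dist i j : ℝ) * f i * f j)
        (fun v hv => by simp [fzero v hv])
    rw [inner, inner, inner, inner]
    rw [f0, f1, f2, f3, d01, d12, d23, d03, d02, d13,
        SimpleGraph.dist_comm (G := G) (u := φ 1) (v := φ 0), d01,
        SimpleGraph.dist_comm (G := G) (u := φ 2) (v := φ 1), d12,
        SimpleGraph.dist_comm (G := G) (u := φ 3) (v := φ 2), d23,
        SimpleGraph.dist_comm (G := G) (u := φ 3) (v := φ 0), d03,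
        SimpleGraph.dist_comm (G := G) (u := φ 2) (v := φ 0), d02,
        SimpleGraph.dist_comm (G := G) (u := φ 3) (v := φ 1), d13,
        SimpleGraph.dist_self, SimpleGraph.dist_self,
        SimpleGraph.dist_self, SimpleGraph.dist_self]
    push_cast
    ring
  -- bounded above
  have hbdd : BddAbove {x : ℝ | ∃ f : V → ℝ,
      (∑ i, f i ^ 2) = 1 ∧ (∑ i, f i) = 0 ∧
      x = ∑ i, ∑ j, (G.dist i j : ℝ) * f i * f j} := by
    refine ⟨∑ i, ∑ j, (G.dist i j : ℝ), ?_⟩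
    rintro x ⟨g, hg1, -, rfl⟩
    have habs : ∀ i : V, g i ^ 2 ≤ 1 := by
      intro i
      rw [← hg1]
      exact Finset.single_le_sum (fun k _ => sq_nonneg (g k)) (Finset.mem_univ i)
    refine Finset.sum_le_sum fun i _ => Finset.sum_le_sum fun j _ => ?_
    have hmul : g i * g j ≤ 1 := by nlinarith [habs i, habs j, sq_nonneg (g i - g j)]
    have hd : (0:ℝ) ≤ (G.dist i j : ℝ) := Nat.cast_nonneg _
    calc (G.dist i j : ℝ) * g i * g j = (G.dist i j : ℝ) * (g i * g j) := by ring
      _ ≤ (G.dist i j : ℝ) * 1 := mul_le_mul_of_nonneg_left hmul hd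
      _ = (G.dist i j : ℝ) := mul_one _
  exact le_csSup hbdd ⟨f, hsq, hlin, hx.symm⟩
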